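/- arXiv:1809.06051 — 2 statements merged into one kernel-verified Lean document; each statement's English description precedes it below -/
import Mathlib

section
/- Let (W,ω) and (V,υ) be Bessel fusion sequences in H, m ∈ ℓ∞(I), R ∈ ℓ∞(I,B(H)), and assume that the Bessel fusion multiplier M_{mR,V,W} is invertible on H. Then each of the four families (W,ω), (V,υ), (W, {|m_i|ω_i}) and (V, {|m_i|υ_i}) satisfies the fusion frame inequalities: for instance, there exist constants 0 < α' ≤ β' with α'‖x‖² ≤ Σ_{i∈I} |m_i|²ω_i²‖P_{W_i}x‖² ≤ β'‖x‖² for all x ∈ H, and likewise for the other three families. -/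
noncomputable section

open ContinuousLinearMap

/-- Orthogonal projection onto a closed subspace, as an operator on `H`. -/
def fproj {H : Type*} [NormedAddCommGroup H] [InnerProductSpace ℂ H] [CompleteSpace H]
    (W : Submodule ℂ H) (hW : IsClosed (W : Set H)) : H →L[ℂ] H :=
  haveI : CompleteSpace W := hW.completeSpace_coe
  W.subtypeL.comp (W.orthogonalProjection)

/-- The family of closed subspaces `W` with weights `c` satisfies the fusion frame
inequalities. -/
def FusionFrameIneq {H : Type*} [NormedAddCommGroup H] [InnerProductSpace ℂ H]
    [CompleteSpace H] {I : Type*}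
    (W : I → Submodule ℂ H) (hW : ∀ i, IsClosed ((W i) : Set H)) (c : I → ℝ) : Prop :=
  ∃ a b : ℝ, 0 < a ∧ a ≤ b ∧ ∀ x : H, ∃ s : ℝ,
    HasSum (fun i => c i ^ 2 * ‖fproj (W i) (hW i) x‖ ^ 2) s ∧
    a * ‖x‖ ^ 2 ≤ s ∧ s ≤ b * ‖x‖ ^ 2

/-!
If `N` is a left inverse of `M`, then
`‖x‖² = ⟪N† x, M x⟫ = ∑ mᵢ υᵢ ωᵢ ⟪P_{Vᵢ} N† x, Rᵢ P_{Wᵢ} x⟫`.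
Whenever `|mᵢ| ‖Rᵢ‖ ≤ aᵢ bᵢ`, the `i`-th term is at most `(aᵢ ωᵢ ‖P_{Wᵢ} x‖) (bᵢ υᵢ ‖P_{Vᵢ} N† x‖)`,
so Cauchy–Schwarz and the Bessel bound of `(V, bυ)` give
`‖x‖² ≤ (∑ aᵢ² ωᵢ² ‖P_{Wᵢ} x‖²)^{1/2} · C ‖x‖`: a lower frame bound for `(W, aω)`.
A right inverse does the same for `V` through `‖x‖² = ⟪x, M N x⟫`.
The choices `(a, b) = (1, sup |m| · sup ‖R‖)` and `(|m|, sup ‖R‖)` give the four families.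
-/

open scoped InnerProductSpace

theorem norm_le_sqrt_mul_sqrt_of_hasSum {ι E : Type*} [SeminormedAddCommGroup E]
    {h : ι → E} {s : E} {f g : ι → ℝ} {A B : ℝ} (hs : HasSum h s)
    (hf : ∀ i, 0 ≤ f i) (hg : ∀ i, 0 ≤ g i)
    (hA : HasSum (fun i => f i ^ 2) A) (hB : HasSum (fun i => g i ^ 2) B)
    (hfg : ∀ i, ‖h i‖ ≤ f i * g i) : ‖s‖ ≤ √A * √B := by
  have hA' : HasSum (fun i => f i ^ (2 : ℝ)) (√A ^ (2 : ℝ)) := by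
    simpa [Real.rpow_two, Real.sq_sqrt (hA.nonneg fun i => sq_nonneg (f i))] using hA
  have hB' : HasSum (fun i => g i ^ (2 : ℝ)) (√B ^ (2 : ℝ)) := by
    simpa [Real.rpow_two, Real.sq_sqrt (hB.nonneg fun i => sq_nonneg (g i))] using hB
  obtain ⟨C, -, hCAB, hC⟩ := Real.inner_le_Lp_mul_Lq_hasSum_of_nonneg .two_two
    (Real.sqrt_nonneg A) (Real.sqrt_nonneg B) hf hg hA' hB'
  exact (hs.norm_le_of_bounded hC hfg).trans hCAB

theorem HasSum.inner_left {ι 𝕜 E : Type*} [RCLike 𝕜] [SeminormedAddCommGroup E]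
    [InnerProductSpace 𝕜 E] {f : ι → E} {a : E} (hf : HasSum f a) (y : E) :
    HasSum (fun i => ⟪y, f i⟫_𝕜) ⟪y, a⟫_𝕜 :=
  (innerSL 𝕜 y).hasSum hf

section FusionBessel

variable {H : Type*} [NormedAddCommGroup H] [InnerProductSpace ℂ H] [CompleteSpace H] {I : Type*}

theorem inner_fproj_left (W : Submodule ℂ H) (hW : IsClosed (W : Set H)) (x y : H) :
    ⟪fproj W hW x, y⟫_ℂ = ⟪x, fproj W hW y⟫_ℂ :=
  haveI : CompleteSpace W := hW.completeSpace_coe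
  W.inner_starProjection_left_eq_right x y

theorem norm_inner_fproj_right_le (W : Submodule ℂ H) (hW : IsClosed (W : Set H)) (x y : H) :
    ‖⟪x, fproj W hW y⟫_ℂ‖ ≤ ‖fproj W hW x‖ * ‖y‖ := by
  rw [← inner_fproj_left]
  exact norm_inner_le_norm _ _

def FusionBesselBound (W : I → Submodule ℂ H) (hW : ∀ i, IsClosed ((W i) : Set H)) (c : I → ℝ)
    (β : ℝ) : Prop :=
  ∀ x : H, ∃ s : ℝ, HasSum (fun i => c i ^ 2 * ‖fproj (W i) (hW i) x‖ ^ 2) s ∧ s ≤ β * ‖x‖ ^ 2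

namespace FusionBesselBound

variable {W : I → Submodule ℂ H} {hW : ∀ i, IsClosed ((W i) : Set H)} {c : I → ℝ} {β : ℝ}

theorem le_of_hasSum (h : FusionBesselBound W hW c β) {x : H} {s : ℝ}
    (hs : HasSum (fun i => c i ^ 2 * ‖fproj (W i) (hW i) x‖ ^ 2) s) : s ≤ β * ‖x‖ ^ 2 := by
  obtain ⟨s', hs', hle⟩ := h x
  exact hs.unique hs' ▸ hle

theorem mul_weight (h : FusionBesselBound W hW c β) {t : I → ℝ} {τ : ℝ}
    (ht0 : ∀ i, 0 ≤ t i) (ht : ∀ i, t i ≤ τ) :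
    FusionBesselBound W hW (fun i => t i * c i) (τ ^ 2 * β) := by
  intro x
  obtain ⟨s, hs, hle⟩ := h x
  have hterm : ∀ i, (t i * c i) ^ 2 * ‖fproj (W i) (hW i) x‖ ^ 2
      ≤ τ ^ 2 * (c i ^ 2 * ‖fproj (W i) (hW i) x‖ ^ 2) := fun i => by
    rw [mul_pow, mul_assoc]
    gcongr
    exacts [ht0 i, ht i]
  have hτs := hs.mul_left (τ ^ 2)
  have hsum := Summable.of_nonneg_of_le (fun i => by positivity) hterm hτs.summable
  refine ⟨_, hsum.hasSum, ?_⟩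
  calc _ ≤ τ ^ 2 * s := hasSum_le hterm hsum.hasSum hτs
    _ ≤ τ ^ 2 * (β * ‖x‖ ^ 2) := by gcongr
    _ = _ := by ring

theorem fusionFrameIneq_of_le_mul (h : FusionBesselBound W hW c β) (C : ℝ)
    (hC : ∀ x s, HasSum (fun i => c i ^ 2 * ‖fproj (W i) (hW i) x‖ ^ 2) s → ‖x‖ ^ 2 ≤ C * s) :
    FusionFrameIneq W hW c := by
  refine ⟨(max C 1)⁻¹, max β (max C 1)⁻¹, by positivity, le_max_right _ _, fun x => ?_⟩
  obtain ⟨s, hs, hle⟩ := h x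
  have hs0 : 0 ≤ s := hs.nonneg fun i => by positivity
  refine ⟨s, hs, ?_, hle.trans (by gcongr; exact le_max_left _ _)⟩
  rw [inv_mul_le_iff₀ (by positivity)]
  exact (hC x s hs).trans (by gcongr; exact le_max_left _ _)

theorem fusionFrameIneq_of_hasSum_norm_sq (h : FusionBesselBound W hW c β) (hc : ∀ i, 0 ≤ c i)
    {V : I → Submodule ℂ H} {hV : ∀ i, IsClosed ((V i) : Set H)} {d : I → ℝ} {γ : ℝ}
    (hd : ∀ i, 0 ≤ d i) (hdγ : FusionBesselBound V hV d γ) (T : H →L[ℂ] H)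
    (hdom : ∀ x, ∃ u : I → ℂ, HasSum u (‖x‖ ^ 2 : ℂ) ∧
      ∀ i, ‖u i‖ ≤ c i * ‖fproj (W i) (hW i) x‖ * (d i * ‖fproj (V i) (hV i) (T x)‖)) :
    FusionFrameIneq W hW c := by
  refine h.fusionFrameIneq_of_le_mul ((√γ * ‖T‖) ^ 2) fun x s hs => ?_
  obtain ⟨u, hu, hule⟩ := hdom x
  obtain ⟨t, ht, -⟩ := hdγ (T x)
  have hcs : ‖x‖ ^ 2 ≤ √s * √t := by
    simpa using norm_le_sqrt_mul_sqrt_of_hasSum hu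
      (fun i => mul_nonneg (hc i) (norm_nonneg _)) (fun i => mul_nonneg (hd i) (norm_nonneg _))
      (by simpa only [mul_pow] using hs) (by simpa only [mul_pow] using ht) hule
  have hsqrt_t : √t ≤ √γ * ‖T‖ * ‖x‖ := calc
    √t ≤ √(γ * ‖T x‖ ^ 2) := Real.sqrt_le_sqrt (hdγ.le_of_hasSum ht)
    _ = √γ * ‖T x‖ := by rw [Real.sqrt_mul' _ (sq_nonneg _), Real.sqrt_sq (norm_nonneg _)]
    _ ≤ √γ * ‖T‖ * ‖x‖ := by rw [mul_assoc]; gcongr; exact T.le_opNorm x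
  have hx_le : ‖x‖ ≤ √s * (√γ * ‖T‖) := by
    rcases (norm_nonneg x).eq_or_lt with hx0 | hx0
    · rw [← hx0]; positivity
    · refine le_of_mul_le_mul_right ?_ hx0
      calc ‖x‖ * ‖x‖ = ‖x‖ ^ 2 := (sq _).symm
        _ ≤ √s * (√γ * ‖T‖ * ‖x‖) := hcs.trans (by gcongr)
        _ = _ := by ring
  calc ‖x‖ ^ 2 ≤ (√s * (√γ * ‖T‖)) ^ 2 := by gcongr
    _ = _ := by rw [mul_pow, Real.sq_sqrt (hs.nonneg fun i => by positivity)]; ring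

end FusionBesselBound

section Multiplier

variable {W V : I → Submodule ℂ H} {hW : ∀ i, IsClosed ((W i) : Set H)}
  {hV : ∀ i, IsClosed ((V i) : Set H)} {ω υ : I → ℝ} {m : I → ℂ} {R : I → H →L[ℂ] H}

theorem norm_inner_multiplier_term_le {i : I} (hω : 0 ≤ ω i) (hυ : 0 ≤ υ i) (y z : H) :
    ‖⟪y, m i • (υ i * ω i) • fproj (V i) (hV i) (R i (fproj (W i) (hW i) z))⟫_ℂ‖
      ≤ ‖m i‖ * ‖R i‖ * ω i * υ i * (‖fproj (W i) (hW i) z‖ * ‖fproj (V i) (hV i) y‖) := by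
  rw [inner_smul_right, inner_smul_right_eq_smul, norm_mul, norm_smul,
    Real.norm_of_nonneg (by positivity)]
  calc ‖m i‖ * (υ i * ω i * ‖⟪y, fproj (V i) (hV i) (R i (fproj (W i) (hW i) z))⟫_ℂ‖)
      ≤ ‖m i‖ * (υ i * ω i * (‖fproj (V i) (hV i) y‖ * (‖R i‖ * ‖fproj (W i) (hW i) z‖))) := by
        gcongr
        exact (norm_inner_fproj_right_le _ _ _ _).trans (by gcongr; exact (R i).le_opNorm _)
    _ = _ := by ring

variable {M N : H →L[ℂ] H} {βW βV : ℝ} {a b : I → ℝ} {α κ : ℝ}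

theorem fusionFrameIneq_of_leftInverse_multiplier (hω : ∀ i, 0 ≤ ω i) (hυ : ∀ i, 0 ≤ υ i)
    (hWB : FusionBesselBound W hW ω βW) (hVB : FusionBesselBound V hV υ βV)
    (hM : ∀ x, HasSum
      (fun i => m i • (υ i * ω i) • fproj (V i) (hV i) (R i (fproj (W i) (hW i) x))) (M x))
    (ha0 : ∀ i, 0 ≤ a i) (ha : ∀ i, a i ≤ α) (hb0 : ∀ i, 0 ≤ b i) (hb : ∀ i, b i ≤ κ)
    (hab : ∀ i, ‖m i‖ * ‖R i‖ ≤ a i * b i)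
    (hNM : N ∘L M = 1) :
    FusionFrameIneq W hW (fun i => a i * ω i) := by
  refine (hWB.mul_weight ha0 ha).fusionFrameIneq_of_hasSum_norm_sq
    (fun i => mul_nonneg (ha0 i) (hω i)) (fun i => mul_nonneg (hb0 i) (hυ i))
    (hVB.mul_weight hb0 hb) (adjoint N) fun x => ?_
  have hx : ⟪adjoint N x, M x⟫_ℂ = (‖x‖ ^ 2 : ℂ) := by
    rw [adjoint_inner_left, ← comp_apply, hNM, one_apply_eq_self, inner_self_eq_norm_sq_to_K]
    rfl
  refine ⟨_, hx ▸ (hM x).inner_left (adjoint N x), fun i => ?_⟩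
  refine (norm_inner_multiplier_term_le (hω i) (hυ i) _ _).trans ?_
  calc _ ≤ a i * b i * ω i * υ i *
        (‖fproj (W i) (hW i) x‖ * ‖fproj (V i) (hV i) (adjoint N x)‖) := by
        gcongr ?_ * _ * _ * _
        exacts [hυ i, hω i, hab i]
    _ = _ := by ring

theorem fusionFrameIneq_of_rightInverse_multiplier (hω : ∀ i, 0 ≤ ω i) (hυ : ∀ i, 0 ≤ υ i)
    (hWB : FusionBesselBound W hW ω βW) (hVB : FusionBesselBound V hV υ βV)
    (hM : ∀ x, HasSum
      (fun i => m i • (υ i * ω i) • fproj (V i) (hV i) (R i (fproj (W i) (hW i) x))) (M x))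
    (ha0 : ∀ i, 0 ≤ a i) (ha : ∀ i, a i ≤ α) (hb0 : ∀ i, 0 ≤ b i) (hb : ∀ i, b i ≤ κ)
    (hab : ∀ i, ‖m i‖ * ‖R i‖ ≤ a i * b i)
    (hMN : M ∘L N = 1) :
    FusionFrameIneq V hV (fun i => a i * υ i) := by
  refine (hVB.mul_weight ha0 ha).fusionFrameIneq_of_hasSum_norm_sq
    (fun i => mul_nonneg (ha0 i) (hυ i)) (fun i => mul_nonneg (hb0 i) (hω i))
    (hWB.mul_weight hb0 hb) N fun x => ?_
  have hx : ⟪x, M (N x)⟫_ℂ = (‖x‖ ^ 2 : ℂ) := by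
    rw [← comp_apply, hMN, one_apply_eq_self, inner_self_eq_norm_sq_to_K]
    rfl
  refine ⟨_, hx ▸ (hM (N x)).inner_left x, fun i => ?_⟩
  refine (norm_inner_multiplier_term_le (hω i) (hυ i) _ _).trans ?_
  calc _ ≤ a i * b i * ω i * υ i * (‖fproj (W i) (hW i) (N x)‖ * ‖fproj (V i) (hV i) x‖) := by
        gcongr ?_ * _ * _ * _
        exacts [hυ i, hω i, hab i]
    _ = _ := by ring

end Multiplier

end FusionBessel

theorem fusionFrame_of_invertible_multiplier_general
    {H : Type*} [NormedAddCommGroup H] [InnerProductSpace ℂ H] [CompleteSpace H]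
    {I : Type*}
    (W V : I → Submodule ℂ H)
    (hW : ∀ i, IsClosed ((W i) : Set H)) (hV : ∀ i, IsClosed ((V i) : Set H))
    (ω υ : I → ℝ)
    (hωseq : ∀ i, 0 ≤ ω i ∧ (ω i = 0 ↔ W i = ⊥))
    (hυseq : ∀ i, 0 ≤ υ i ∧ (υ i = 0 ↔ V i = ⊥))
    (βW βV : ℝ)
    (hWB : ∀ x : H, ∃ s : ℝ,
      HasSum (fun i => ω i ^ 2 * ‖fproj (W i) (hW i) x‖ ^ 2) s ∧ s ≤ βW * ‖x‖ ^ 2)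
    (hVB : ∀ x : H, ∃ s : ℝ,
      HasSum (fun i => υ i ^ 2 * ‖fproj (V i) (hV i) x‖ ^ 2) s ∧ s ≤ βV * ‖x‖ ^ 2)
    (m : I → ℂ) (hm : BddAbove (Set.range fun i => ‖m i‖))
    (R : I → H →L[ℂ] H) (hR : BddAbove (Set.range fun i => ‖R i‖))
    -- the multiplier M_{mR,V,W} and its invertibility
    (M : H →L[ℂ] H)
    (hM : ∀ x : H, HasSum
      (fun i => m i • (υ i * ω i) • fproj (V i) (hV i) ((R i) (fproj (W i) (hW i) x))) (M x))
    (hMinv : ∃ N : H →L[ℂ] H, M ∘L N = 1 ∧ N ∘L M = 1) :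
    FusionFrameIneq W hW ω ∧ FusionFrameIneq V hV υ ∧
    FusionFrameIneq W hW (fun i => ‖m i‖ * ω i) ∧
    FusionFrameIneq V hV (fun i => ‖m i‖ * υ i) := by
  obtain ⟨N, hMN, hNM⟩ := hMinv
  obtain ⟨μ, hμ0, hμ⟩ := hm.exists_ge 0
  obtain ⟨ρ, hρ0, hρ⟩ := hR.exists_ge 0
  rw [Set.forall_mem_range] at hμ hρ
  have hω i := (hωseq i).1
  have hυ i := (hυseq i).1
  have hmR_one i : ‖m i‖ * ‖R i‖ ≤ 1 * (μ * ρ) := by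
    rw [one_mul]
    exact mul_le_mul (hμ i) (hρ i) (norm_nonneg _) hμ0
  have hmR_norm i : ‖m i‖ * ‖R i‖ ≤ ‖m i‖ * ρ := by
    gcongr
    exact hρ i
  refine ⟨?_, ?_, ?_, ?_⟩
  · simpa only [one_mul] using
      fusionFrameIneq_of_leftInverse_multiplier (a := fun _ => 1) hω hυ hWB hVB hM
        (fun _ => zero_le_one) (fun _ => le_rfl) (fun _ => by positivity) (fun _ => le_rfl)
        hmR_one hNM
  · simpa only [one_mul] using
      fusionFrameIneq_of_rightInverse_multiplier (a := fun _ => 1) hω hυ hWB hVB hM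
        (fun _ => zero_le_one) (fun _ => le_rfl) (fun _ => by positivity) (fun _ => le_rfl)
        hmR_one hMN
  · exact fusionFrameIneq_of_leftInverse_multiplier hω hυ hWB hVB hM
      (fun i => norm_nonneg (m i)) hμ (fun _ => hρ0) (fun _ => le_rfl) hmR_norm hNM
  · exact fusionFrameIneq_of_rightInverse_multiplier hω hυ hWB hVB hM
      (fun i => norm_nonneg (m i)) hμ (fun _ => hρ0) (fun _ => le_rfl) hmR_norm hMN

/-- If the Bessel fusion multiplier `M_{mR,V,W}` is invertible, then `(W,ω)`,
`(V,υ)`, `(W,{|m_i|ω_i})` and `(V,{|m_i|υ_i})` all satisfy the fusion frame inequalities. -/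
theorem fusionFrame_of_invertible_multiplier
    {H : Type*} [NormedAddCommGroup H] [InnerProductSpace ℂ H] [CompleteSpace H]
    [TopologicalSpace.SeparableSpace H]
    {I : Type*} [Countable I]
    (W V : I → Submodule ℂ H)
    (hW : ∀ i, IsClosed ((W i) : Set H)) (hV : ∀ i, IsClosed ((V i) : Set H))
    (ω υ : I → ℝ)
    (hωseq : ∀ i, 0 ≤ ω i ∧ (ω i = 0 ↔ W i = ⊥))
    (hυseq : ∀ i, 0 ≤ υ i ∧ (υ i = 0 ↔ V i = ⊥))
    (βW βV : ℝ)
    (hWB : ∀ x : H, ∃ s : ℝ,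
      HasSum (fun i => ω i ^ 2 * ‖fproj (W i) (hW i) x‖ ^ 2) s ∧ s ≤ βW * ‖x‖ ^ 2)
    (hVB : ∀ x : H, ∃ s : ℝ,
      HasSum (fun i => υ i ^ 2 * ‖fproj (V i) (hV i) x‖ ^ 2) s ∧ s ≤ βV * ‖x‖ ^ 2)
    (m : I → ℂ) (hm : BddAbove (Set.range fun i => ‖m i‖))
    (R : I → H →L[ℂ] H) (hR : BddAbove (Set.range fun i => ‖R i‖))
    -- the multiplier M_{mR,V,W} and its invertibility
    (M : H →L[ℂ] H)
    (hM : ∀ x : H, HasSum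
      (fun i => m i • (υ i * ω i) • fproj (V i) (hV i) ((R i) (fproj (W i) (hW i) x))) (M x))
    (hMinv : ∃ N : H →L[ℂ] H, M ∘L N = 1 ∧ N ∘L M = 1) :
    FusionFrameIneq W hW ω ∧ FusionFrameIneq V hV υ ∧
    FusionFrameIneq W hW (fun i => ‖m i‖ * ω i) ∧
    FusionFrameIneq V hV (fun i => ‖m i‖ * υ i) :=
  fusionFrame_of_invertible_multiplier_general W V hW hV ω υ hωseq hυseq βW βV hWB hVB m hm R hR M
    hM hMinv
end
end

section
/- Let (W,ω) and (V,υ) be Bessel fusion sequences in H, and let m ∈ ℓ∞(I) and R ∈ ℓ∞(I,B(H)) satisfy condition C(m,R). If the Bessel fusion multiplier M_{mR,V,W} is invertible on H, then (W,ω) and (V,υ) have the same excess: dim ker(T*_{W,ω}) = dim ker(T*_{V,υ}). -/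
/-!
Let `D` be the diagonal operator on `ℓ²(I, H)` with entries `m i • R i`; condition `C(m,R)` makes
each entry invertible, with norm at most `δ` and inverse of norm at most `γ⁻¹`, so `D` is invertible. The multiplier
factors as `M = T_V D T_W*`, and since `M` is invertible, `T_W*` is bounded below and
`ℓ²(I, H) = range T_W* ⊕ ker (T_V D)`. As `range T_W*` is closed, also
`ℓ²(I, H) = range T_W* ⊕ (range T_W*)ᗮ = range T_W* ⊕ ker T_W`. Two complements of the same
subspace are isomorphic, and `ker (T_V D) = D⁻¹ (ker T_V)`.
-/

noncomputable section

open ContinuousLinearMap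

/-- Condition `C(m,R)` with constants `γ, δ`. -/
def CondC {H : Type*} [NormedAddCommGroup H] [InnerProductSpace ℂ H] [CompleteSpace H]
    {I : Type*} (m : I → ℂ) (R : I → H →L[ℂ] H) (γ δ : ℝ) : Prop :=
  0 < γ ∧ 0 < δ ∧ ∀ (j : I) (x : H),
    γ * ‖x‖ ≤ ‖(starRingEnd ℂ) (m j) • (ContinuousLinearMap.adjoint (R j)) x‖ ∧
    ‖(starRingEnd ℂ) (m j) • (ContinuousLinearMap.adjoint (R j)) x‖ ≤ δ * ‖x‖ ∧
    γ * ‖x‖ ≤ ‖m j • (R j) x‖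

open scoped ENNReal NNReal

universe u

theorem LinearMap.isCompl_range_ker_of_bijective_comp {R M N P : Type*} [Ring R]
    [AddCommGroup M] [AddCommGroup N] [AddCommGroup P] [Module R M] [Module R N] [Module R P]
    (S : M →ₗ[R] N) (T : N →ₗ[R] P) (h : Function.Bijective (T ∘ₗ S)) :
    IsCompl (LinearMap.range S) (LinearMap.ker T) := by
  let g := LinearEquiv.ofBijective (T ∘ₗ S) h
  constructor
  · rw [Submodule.disjoint_def]
    rintro _ ⟨x, rfl⟩ hx
    rw [h.1 (by simpa using hx : (T ∘ₗ S) x = (T ∘ₗ S) 0), map_zero]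
  · rw [Submodule.codisjoint_iff_exists_add_eq]
    intro y
    refine ⟨S (g.symm (T y)), y - S (g.symm (T y)), LinearMap.mem_range_self _ _, ?_,
      add_sub_cancel _ _⟩
    have : T (S (g.symm (T y))) = T y := g.apply_symm_apply (T y)
    simp [this]

theorem LinearMap.rank_ker_comp_equiv {R P : Type*} {M N : Type u} [Ring R]
    [AddCommGroup M] [AddCommGroup N] [AddCommGroup P] [Module R M] [Module R N] [Module R P]
    (T : N →ₗ[R] P) (e : M ≃ₗ[R] N) :
    Module.rank R (LinearMap.ker (T ∘ₗ (e : M →ₗ[R] N))) = Module.rank R (LinearMap.ker T) := by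
  rw [LinearMap.ker_comp, Submodule.comap_equiv_eq_map_symm, LinearEquiv.rank_map_eq]

namespace lp

variable {𝕜 ι : Type*} [RCLike 𝕜] {E F : ι → Type*}
  [∀ i, NormedAddCommGroup (E i)] [∀ i, NormedSpace 𝕜 (E i)]
  [∀ i, NormedAddCommGroup (F i)] [∀ i, NormedSpace 𝕜 (F i)]
  {p : ℝ≥0∞}

theorem norm_apply_le_norm_smul_apply {T : ∀ i, E i →L[𝕜] F i} {C : ℝ≥0} (hT : ∀ i, ‖T i‖ ≤ C)
    (x : lp E p) (i : ι) : ‖T i (x i)‖ ≤ ‖(((C : ℝ) : 𝕜) • x) i‖ := by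
  change _ ≤ ‖((C : ℝ) : 𝕜) • x i‖
  rw [norm_smul, RCLike.norm_ofReal, NNReal.abs_eq]
  exact (T i).le_of_opNorm_le (hT i) _

variable [Fact (1 ≤ p)]

def diagonal (T : ∀ i, E i →L[𝕜] F i) (C : ℝ≥0) (hT : ∀ i, ‖T i‖ ≤ C) : lp E p →L[𝕜] lp F p :=
  LinearMap.mkContinuous
    { toFun := fun x => ⟨fun i => T i (x i),
        ((lp.memℓp (((C : ℝ) : 𝕜) • x)).mono' (norm_apply_le_norm_smul_apply hT x))⟩
      map_add' := fun x y => lp.ext <| funext fun i => map_add (T i) (x i) (y i)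
      map_smul' := fun c x => lp.ext <| funext fun i => map_smul (T i) c (x i) }
    C
    fun x => by
      have hp : p ≠ 0 := (zero_lt_one.trans_le Fact.out).ne'
      refine (lp.norm_mono hp (norm_apply_le_norm_smul_apply hT x)).trans ?_
      rw [lp.norm_const_smul hp, RCLike.norm_ofReal, NNReal.abs_eq]

def diagonalEquiv (e : ∀ i, E i ≃L[𝕜] F i) (C C' : ℝ≥0)
    (he : ∀ i, ‖(e i : E i →L[𝕜] F i)‖ ≤ C) (he' : ∀ i, ‖((e i).symm : F i →L[𝕜] E i)‖ ≤ C') :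
    lp E p ≃L[𝕜] lp F p :=
  ContinuousLinearEquiv.equivOfInverse (diagonal (fun i => e i) C he)
    (diagonal (fun i => (e i).symm) C' he')
    (fun x => lp.ext <| funext fun i => (e i).symm_apply_apply (x i))
    (fun y => lp.ext <| funext fun i => (e i).apply_symm_apply (y i))

end lp

theorem lp.adjoint_apply_of_hasSum {𝕜 ι F : Type*} [RCLike 𝕜] {E : ι → Type*}
    [∀ i, NormedAddCommGroup (E i)] [∀ i, InnerProductSpace 𝕜 (E i)] [∀ i, CompleteSpace (E i)]
    [NormedAddCommGroup F] [InnerProductSpace 𝕜 F] [CompleteSpace F]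
    (T : lp E 2 →L[𝕜] F) (f : ∀ i, E i →L[𝕜] F) (hT : ∀ x, HasSum (fun i => f i (x i)) (T x))
    (y : F) (i : ι) : adjoint T y i = adjoint (f i) y := by
  classical
  refine ext_inner_right 𝕜 fun v => ?_
  have hsingle : T (lp.single 2 i v) = f i v := by
    refine ((hasSum_single i fun j hj => ?_).unique (hT _)).symm.trans ?_
    · rw [lp.single_apply_ne 2 i v hj, map_zero]
    · rw [lp.single_apply_self]
  rw [← lp.inner_single_right, adjoint_inner_left, hsingle, adjoint_inner_left]

namespace ContinuousLinearMap

variable {𝕜 E F G : Type*} [RCLike 𝕜]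
  [NormedAddCommGroup E] [InnerProductSpace 𝕜 E] [CompleteSpace E]
  [NormedAddCommGroup F] [InnerProductSpace 𝕜 F] [CompleteSpace F]
  [NormedAddCommGroup G] [InnerProductSpace 𝕜 G] [CompleteSpace G]

theorem bijective_of_le_norm_apply_of_le_norm_adjoint_apply {A : E →L[𝕜] F} {γ : ℝ}
    (hγ : 0 < γ) (hA : ∀ x, γ * ‖x‖ ≤ ‖A x‖) (hA' : ∀ y, γ * ‖y‖ ≤ ‖adjoint A y‖) :
    Function.Bijective A := by
  have hanti : AntilipschitzWith γ⁻¹.toNNReal A :=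
    A.antilipschitz_of_bound fun x => by
      rw [Real.coe_toNNReal _ (inv_nonneg.2 hγ.le), ← div_eq_inv_mul, le_div_iff₀' hγ]
      exact hA x
  refine A.bijective_iff_dense_range_and_antilipschitz.2 ⟨?_, _, hanti⟩
  rw [Submodule.topologicalClosure_eq_top_iff, orthogonal_range, Submodule.eq_bot_iff]
  intro y hy
  have := hA' y
  rw [show adjoint A y = 0 from hy, norm_zero] at this
  exact norm_le_zero_iff.1 (nonpos_of_mul_nonpos_right this hγ)

theorem rank_ker_adjoint_eq_rank_ker_of_bijective_comp (S : E →L[𝕜] F) (T : F →L[𝕜] G)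
    (hTS : Function.Bijective (T ∘L S)) :
    Module.rank 𝕜 (LinearMap.ker (adjoint S : F →ₗ[𝕜] E)) =
      Module.rank 𝕜 (LinearMap.ker (T : F →ₗ[𝕜] G)) := by
  let e := ContinuousLinearEquiv.ofBijective (T ∘L S) (LinearMap.ker_eq_bot.2 hTS.1)
    (LinearMap.range_eq_top.2 hTS.2)
  have hS : AntilipschitzWith (‖(e.symm : G →L[𝕜] E)‖₊ * ‖T‖₊) S :=
    S.antilipschitz_of_bound fun x => calc
      ‖x‖ = ‖e.symm (T (S x))‖ := (congrArg norm (e.symm_apply_apply x)).symm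
      _ ≤ ‖(e.symm : G →L[𝕜] E)‖ * (‖T‖ * ‖S x‖) :=
        (e.symm : G →L[𝕜] E).le_opNorm_of_le (T.le_opNorm _)
      _ = _ := (mul_assoc _ _ _).symm
  have : CompleteSpace (LinearMap.range (S : E →ₗ[𝕜] F)) := hS.completeSpace_range_clm
  have hcompl₁ := (LinearMap.range (S : E →ₗ[𝕜] F)).isCompl_orthogonal
  rw [orthogonal_range] at hcompl₁
  have hcompl₂ :=
    LinearMap.isCompl_range_ker_of_bijective_comp (S : E →ₗ[𝕜] F) (T : F →ₗ[𝕜] G) hTS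
  exact ((Submodule.quotientEquivOfIsCompl _ _ hcompl₁).symm.trans
    (Submodule.quotientEquivOfIsCompl _ _ hcompl₂)).rank_eq

end ContinuousLinearMap

section Fusion

variable {H : Type*} [NormedAddCommGroup H] [InnerProductSpace ℂ H] [CompleteSpace H] {I : Type*}

theorem isSelfAdjoint_fproj (W : Submodule ℂ H) (hW : IsClosed (W : Set H)) :
    IsSelfAdjoint (fproj W hW) :=
  have : CompleteSpace W := hW.completeSpace_coe
  isSelfAdjoint_starProjection W

theorem adjoint_smul_fproj (r : ℝ) (W : Submodule ℂ H) (hW : IsClosed (W : Set H)) :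
    adjoint (r • fproj W hW) = r • fproj W hW := by
  rw [RCLike.real_smul_eq_coe_smul (K := ℂ), map_smulₛₗ, (isSelfAdjoint_fproj W hW).adjoint_eq,
    RCLike.conj_ofReal]

theorem adjoint_synthesis_apply (W : I → Submodule ℂ H) (hW : ∀ i, IsClosed ((W i) : Set H))
    (ω : I → ℝ) (T : lp (fun _ : I => H) 2 →L[ℂ] H)
    (hT : ∀ x : lp (fun _ : I => H) 2, HasSum (fun i => ω i • fproj (W i) (hW i) (x i)) (T x))
    (y : H) (i : I) : adjoint T y i = ω i • fproj (W i) (hW i) y := by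
  rw [lp.adjoint_apply_of_hasSum T (fun i => ω i • fproj (W i) (hW i)) hT, adjoint_smul_fproj]
  rfl

end Fusion

namespace CondC

variable {H : Type*} [NormedAddCommGroup H] [InnerProductSpace ℂ H] [CompleteSpace H]
  {I : Type*} {m : I → ℂ} {R : I → H →L[ℂ] H} {γ δ : ℝ}

theorem bijective (hC : CondC m R γ δ) (j : I) : Function.Bijective (m j • R j) :=
  bijective_of_le_norm_apply_of_le_norm_adjoint_apply hC.1 (fun x => (hC.2.2 j x).2.2)
    fun x => by rw [map_smulₛₗ]; exact (hC.2.2 j x).1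

theorem norm_smul_le (hC : CondC m R γ δ) (j : I) : ‖m j • R j‖ ≤ δ := by
  rw [← LinearIsometryEquiv.norm_map adjoint, map_smulₛₗ]
  exact opNorm_le_bound _ hC.2.1.le fun x => (hC.2.2 j x).2.1

def equiv (hC : CondC m R γ δ) (j : I) : H ≃L[ℂ] H :=
  ContinuousLinearEquiv.ofBijective (m j • R j) (LinearMap.ker_eq_bot.2 (hC.bijective j).1)
    (LinearMap.range_eq_top.2 (hC.bijective j).2)

theorem equiv_apply (hC : CondC m R γ δ) (j : I) (x : H) : hC.equiv j x = m j • R j x := rfl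

theorem norm_equiv_symm_le (hC : CondC m R γ δ) (j : I) :
    ‖((hC.equiv j).symm : H →L[ℂ] H)‖ ≤ γ⁻¹ :=
  opNorm_le_bound _ (inv_nonneg.2 hC.1.le) fun y => by
    rw [le_inv_mul_iff₀ hC.1]
    simpa [← hC.equiv_apply] using (hC.2.2 j ((hC.equiv j).symm y)).2.2

end CondC

theorem excess_eq_of_invertible_multiplier_condC_general
    {H : Type*} [NormedAddCommGroup H] [InnerProductSpace ℂ H] [CompleteSpace H]
    {I : Type*}
    (W V : I → Submodule ℂ H)
    (hW : ∀ i, IsClosed ((W i) : Set H)) (hV : ∀ i, IsClosed ((V i) : Set H))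
    (ω υ : I → ℝ)
    (m : I → ℂ)
    (R : I → H →L[ℂ] H)
    (γ δ : ℝ) (hC : CondC m R γ δ)
    -- the multiplier M_{mR,V,W} and its invertibility
    (M : H →L[ℂ] H)
    (hM : ∀ x : H, HasSum
      (fun i => m i • (υ i * ω i) • fproj (V i) (hV i) ((R i) (fproj (W i) (hW i) x))) (M x))
    (hMinv : ∃ N : H →L[ℂ] H, M ∘L N = 1 ∧ N ∘L M = 1)
    -- the synthesis operators of (W,ω) and (V,υ)
    (TW TV : lp (fun _ : I => H) 2 →L[ℂ] H)
    (hTW : ∀ x : lp (fun _ : I => H) 2, HasSum (fun i => ω i • fproj (W i) (hW i) (x i)) (TW x))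
    (hTV : ∀ x : lp (fun _ : I => H) 2, HasSum (fun i => υ i • fproj (V i) (hV i) (x i)) (TV x)) :
    Module.rank ℂ ↥(LinearMap.ker (TW : lp (fun _ : I => H) 2 →ₗ[ℂ] H)) = Module.rank ℂ ↥(LinearMap.ker (TV : lp (fun _ : I => H) 2 →ₗ[ℂ] H)) := by
  obtain ⟨N, hMN, hNM⟩ := hMinv
  let D : lp (fun _ : I => H) 2 ≃L[ℂ] lp (fun _ : I => H) 2 :=
    lp.diagonalEquiv hC.equiv δ.toNNReal γ⁻¹.toNNReal
      (fun j => (hC.norm_smul_le j).trans (Real.le_coe_toNNReal δ))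
      (fun j => (hC.norm_equiv_symm_le j).trans (Real.le_coe_toNNReal _))
  have hfactor :
      (TV ∘L (D : lp (fun _ : I => H) 2 →L[ℂ] lp (fun _ : I => H) 2)) ∘L adjoint TW = M := by
    ext y
    refine (hTV (D (adjoint TW y))).unique ((hM y).congr_fun fun i => ?_)
    change υ i • fproj (V i) (hV i) (hC.equiv i (adjoint TW y i)) = _
    rw [adjoint_synthesis_apply W hW ω TW hTW, hC.equiv_apply, (R i).map_smul_of_tower, map_smul,
      (fproj (V i) (hV i)).map_smul_of_tower, mul_smul, smul_comm (υ i) (m i)]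
  have hMbij : Function.Bijective M :=
    (ContinuousLinearEquiv.equivOfInverse' M N hMN hNM).bijective
  rw [← adjoint_adjoint TW,
    rank_ker_adjoint_eq_rank_ker_of_bijective_comp (adjoint TW) _ (hfactor ▸ hMbij)]
  exact LinearMap.rank_ker_comp_equiv (TV : lp (fun _ : I => H) 2 →ₗ[ℂ] H) D.toLinearEquiv

/-- If `C(m,R)` holds and the Bessel fusion multiplier `M_{mR,V,W}` is
invertible, then `(W,ω)` and `(V,υ)` have the same excess:
`dim ker T*_{W,ω} = dim ker T*_{V,υ}`. -/
theorem excess_eq_of_invertible_multiplier_condC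
    {H : Type*} [NormedAddCommGroup H] [InnerProductSpace ℂ H] [CompleteSpace H]
    [TopologicalSpace.SeparableSpace H]
    {I : Type*} [Countable I]
    (W V : I → Submodule ℂ H)
    (hW : ∀ i, IsClosed ((W i) : Set H)) (hV : ∀ i, IsClosed ((V i) : Set H))
    (ω υ : I → ℝ)
    (hωseq : ∀ i, 0 ≤ ω i ∧ (ω i = 0 ↔ W i = ⊥))
    (hυseq : ∀ i, 0 ≤ υ i ∧ (υ i = 0 ↔ V i = ⊥))
    (βW βV : ℝ)
    (hWB : ∀ x : H, ∃ s : ℝ,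
      HasSum (fun i => ω i ^ 2 * ‖fproj (W i) (hW i) x‖ ^ 2) s ∧ s ≤ βW * ‖x‖ ^ 2)
    (hVB : ∀ x : H, ∃ s : ℝ,
      HasSum (fun i => υ i ^ 2 * ‖fproj (V i) (hV i) x‖ ^ 2) s ∧ s ≤ βV * ‖x‖ ^ 2)
    (m : I → ℂ) (hm : BddAbove (Set.range fun i => ‖m i‖))
    (R : I → H →L[ℂ] H) (hR : BddAbove (Set.range fun i => ‖R i‖))
    (γ δ : ℝ) (hC : CondC m R γ δ)
    -- the multiplier M_{mR,V,W} and its invertibility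
    (M : H →L[ℂ] H)
    (hM : ∀ x : H, HasSum
      (fun i => m i • (υ i * ω i) • fproj (V i) (hV i) ((R i) (fproj (W i) (hW i) x))) (M x))
    (hMinv : ∃ N : H →L[ℂ] H, M ∘L N = 1 ∧ N ∘L M = 1)
    -- the synthesis operators of (W,ω) and (V,υ)
    (TW TV : lp (fun _ : I => H) 2 →L[ℂ] H)
    (hTW : ∀ x : lp (fun _ : I => H) 2, HasSum (fun i => ω i • fproj (W i) (hW i) (x i)) (TW x))
    (hTV : ∀ x : lp (fun _ : I => H) 2, HasSum (fun i => υ i • fproj (V i) (hV i) (x i)) (TV x)) :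
    Module.rank ℂ ↥(LinearMap.ker (TW : lp (fun _ : I => H) 2 →ₗ[ℂ] H)) = Module.rank ℂ ↥(LinearMap.ker (TV : lp (fun _ : I => H) 2 →ₗ[ℂ] H)) :=
  excess_eq_of_invertible_multiplier_condC_general W V hW hV ω υ m R γ δ hC M hM hMinv TW TV hTW hTV
end
end
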